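/- arXiv:math/0010141 — 3 statements merged into one kernel-verified Lean document; each statement's English description precedes it below -/
import Mathlib

section
/- Let φ : F₂ⁿ → ℤ be the homomorphism sending every standard basis element of each free factor to 1, and let H = ker(φ). Then H contains a subgroup isomorphic to F₂ⁿ. -/
/-- The homomorphism `F₂ⁿ → ℤ` sending every standard basis element of every free factor
to `1` (written multiplicatively). -/
noncomputable def sumOfExponents (n : ℕ) :
    (Fin n → FreeGroup (Fin 2)) →* Multiplicative ℤ where
  toFun g := ∏ i, FreeGroup.lift (fun _ => Multiplicative.ofAdd (1 : ℤ)) (g i)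
  map_one' := by simp
  map_mul' g h := by
    simp [Finset.prod_mul_distrib]

/-!
Write `a = of 0`, `b = of 1` for the basis of `F₂`. Let `t` act on `F(ℤ)` by shifting its basis
`(xₖ)`. The homomorphism `F₂ → F(ℤ) ⋊ ℤ`, `a ↦ t`, `b ↦ x₀ t`, sends `b a⁻¹ ↦ x₀` and
`a b a⁻² ↦ t x₀ t⁻¹ = x₁`, so the endomorphism `a ↦ b a⁻¹`, `b ↦ a b a⁻²` of `F₂` is injective:
composed with it, it becomes the inclusion of the free factor on `x₀, x₁`. Both images have
exponent sum `0`, so applying this endomorphism in every coordinate embeds `F₂ⁿ` into `ker φ`.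
-/

open FreeGroup SemidirectProduct Multiplicative

namespace FreeGroup

noncomputable def shiftAut : Multiplicative ℤ →* MulAut (FreeGroup ℤ) :=
  zpowersHom _ (freeGroupCongr (Equiv.addRight 1))

theorem shiftAut_ofAdd_one_of (m : ℤ) : shiftAut (ofAdd 1) (of m) = of (m + 1) := by
  simp [shiftAut]

noncomputable def exponentSum (α : Type*) : FreeGroup α →* Multiplicative ℤ :=
  FreeGroup.lift fun _ => ofAdd 1

noncomputable def kernelEmbedding : FreeGroup (Fin 2) →* FreeGroup (Fin 2) :=
  FreeGroup.lift ![of 1 * (of 0)⁻¹, of 0 * of 1 * (of 0)⁻¹ * (of 0)⁻¹]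

noncomputable def toShiftSemidirect :
    FreeGroup (Fin 2) →* FreeGroup ℤ ⋊[shiftAut] Multiplicative ℤ :=
  FreeGroup.lift ![inr (ofAdd 1), inl (of 0) * inr (ofAdd 1)]

theorem toShiftSemidirect_comp_kernelEmbedding :
    toShiftSemidirect.comp kernelEmbedding =
      (inl : FreeGroup ℤ →* _).comp (map fun i : Fin 2 => (i : ℤ)) := by
  have hconj : (inr (ofAdd 1) * inl (of 0) * (inr (ofAdd 1))⁻¹ :
      FreeGroup ℤ ⋊[shiftAut] Multiplicative ℤ) = inl (of 1) := by
    rw [← _root_.map_inv inr, ← inl_aut, shiftAut_ofAdd_one_of, zero_add]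
  refine FreeGroup.ext_hom _ _ fun i => ?_
  fin_cases i
  · simp [toShiftSemidirect, kernelEmbedding]
  · simp [toShiftSemidirect, kernelEmbedding, ← hconj]
    group

theorem kernelEmbedding_injective : Function.Injective kernelEmbedding := by
  have h : Function.Injective (toShiftSemidirect.comp kernelEmbedding) := by
    rw [toShiftSemidirect_comp_kernelEmbedding, MonoidHom.coe_comp]
    exact inl_injective.comp (map_injective (Nat.cast_injective.comp Fin.val_injective))
  rw [MonoidHom.coe_comp] at h
  exact h.of_comp

theorem exponentSum_kernelEmbedding (x : FreeGroup (Fin 2)) :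
    exponentSum _ (kernelEmbedding x) = 1 := by
  suffices (exponentSum _).comp kernelEmbedding = 1 from DFunLike.congr_fun this x
  refine FreeGroup.ext_hom _ _ fun i => ?_
  fin_cases i <;> simp [exponentSum, kernelEmbedding]

end FreeGroup

/-- the kernel `H` of the homomorphism `φ : F₂ⁿ → ℤ` sending all standard
generators to `1` contains a subgroup isomorphic to `F₂ⁿ`. -/
theorem kernel_contains_F2n (n : ℕ) :
    ∃ ι : (Fin n → FreeGroup (Fin 2)) →* (Fin n → FreeGroup (Fin 2)),
      Function.Injective ι ∧ ι.range ≤ (sumOfExponents n).ker := by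
  refine ⟨MonoidHom.piMap fun _ => kernelEmbedding,
    Pi.map_injective.mpr fun _ => kernelEmbedding_injective, ?_⟩
  rintro _ ⟨g, rfl⟩
  change ∏ i, exponentSum _ (kernelEmbedding (g i)) = 1
  exact Finset.prod_eq_one fun i _ => exponentSum_kernelEmbedding (g i)
end

section
/- For n ≥ 2, the map sending u = (w₃, v₃, …, wₙ, vₙ, α) ∈ F₂^{2n−4} ⋊ F₂ (where F₂ < Aut(F₂) acts diagonally) to the automorphism φ_u of Fₙ = ⟨x₁,…,xₙ⟩ acting as α on ⟨x₁,x₂⟩ and sending xᵢ ↦ wᵢ xᵢ vᵢ⁻¹ for i ≥ 3 (with wᵢ, vᵢ ∈ ⟨x₁,x₂⟩), is an injective group homomorphism F₂^{2n−4} ⋊ F₂ → Aut(Fₙ) whose image projects injectively to Out(Fₙ). -/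
noncomputable section

/-- The free group of rank 2. -/
abbrev F2 : Type := FreeGroup (Fin 2)

/-- The diagonal action of (a copy of) `F₂ ≤ Aut(F₂)` on `(F₂ × F₂)^k`. -/
def diagAct (θ : F2 →* MulAut F2) (k : ℕ) : F2 →* MulAut (Fin k → F2 × F2) where
  toFun α := MulEquiv.piCongrRight fun _ => MulEquiv.prodCongr (θ α) (θ α)
  map_one' := by
    ext x i : 3 <;> simp [MulEquiv.prodCongr]
  map_mul' a b := by
    ext x i : 3 <;> simp [MulEquiv.prodCongr, MulAut.mul_def]

/-- The same action on the opposite group (bookkeeping device matching Mathlib's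
semidirect product convention with the left-to-right composition of automorphisms
implicit in the formula `xᵢ ↦ wᵢ xᵢ vᵢ⁻¹`). -/
def diagActOp (θ : F2 →* MulAut F2) (k : ℕ) : F2 →* MulAut ((Fin k → F2 × F2)ᵐᵒᵖ) where
  toFun α := MulEquiv.op (diagAct θ k α)
  map_one' := by ext x; simp
  map_mul' a b := by ext x; simp

/-- `F₂^{2n-4} ⋊ F₂` with the diagonal action of `F₂ ≤ Aut(F₂)`
(the `2n-4` copies of `F₂` grouped into `n-2` pairs `(wᵢ, vᵢ)`, `3 ≤ i ≤ n`). -/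
abbrev SDP (θ : F2 →* MulAut F2) (n : ℕ) : Type :=
  SemidirectProduct ((Fin (n - 2) → F2 × F2)ᵐᵒᵖ) F2 (diagActOp θ (n - 2))

/-- The inclusion `F₂ = ⟨x₁,x₂⟩ ≤ Fₙ`. -/
def emb (n : ℕ) (hn : 2 ≤ n) : F2 →* FreeGroup (Fin n) :=
  FreeGroup.lift fun k : Fin 2 => FreeGroup.of (Fin.castLE hn k)

/-- The endomorphism `φ_u` of `Fₙ`, for `u = (w₃,v₃,…,wₙ,vₙ,α)`: it acts as `α` on
`⟨x₁,x₂⟩` and sends `xᵢ ↦ wᵢ xᵢ vᵢ⁻¹` for `i ≥ 3`. -/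
def phiU (n : ℕ) (hn : 2 ≤ n) (θ : F2 →* MulAut F2) (u : SDP θ n) :
    FreeGroup (Fin n) →* FreeGroup (Fin n) :=
  FreeGroup.lift fun j : Fin n =>
    if h : (j : ℕ) < 2 then emb n hn (θ u.right (FreeGroup.of ⟨(j : ℕ), h⟩))
    else
      emb n hn (u.left.unop ⟨(j : ℕ) - 2, by have := j.isLt; omega⟩).1 *
        FreeGroup.of j *
        (emb n hn (u.left.unop ⟨(j : ℕ) - 2, by have := j.isLt; omega⟩).2)⁻¹

namespace SDPaux

open FreeGroup

variable {α : Type*} [DecidableEq α]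

lemma reduce_suffix {x : α × Bool} {L : List (α × Bool)}
    (h : reduce (x :: L) = x :: L) : reduce L = L := by
  rw [FreeGroup.reduce.cons] at h
  rcases hL : reduce L with _ | ⟨y, ys⟩ <;> rw [hL] at h
  · have h' : ([x] : List (α × Bool)) = x :: L := h
    injection h' with h1 h2
  · have h' : (if x.1 = y.1 ∧ x.2 = !y.2 then ys else x :: y :: ys) = x :: L := h
    clear h
    split_ifs at h' with hcond
    · exfalso
      have hlen : (reduce L).length ≤ L.length :=
        FreeGroup.Red.length_le (FreeGroup.reduce.red)
      rw [hL, h'] at hlen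
      simp at hlen
    · injection h' with h1 h2

lemma exists_tail {g : FreeGroup α} {x : α × Bool} {L : List (α × Bool)}
    (h : g.toWord = x :: L) :
    g = mk [x] * mk L ∧ (mk L : FreeGroup α).toWord = L := by
  have hred : reduce (x :: L) = x :: L := by
    have := g.reduce_toWord
    rwa [h] at this
  constructor
  · rw [mul_mk]
    have : ([x] ++ L) = x :: L := rfl
    rw [this, ← h, mk_toWord]
  · rw [toWord_mk]
    exact reduce_suffix hred

lemma single_eq_zpow (i : α) (b : Bool) : ∃ m : ℤ, (mk [(i, b)] : FreeGroup α) = of i ^ m := by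
  cases b
  · refine ⟨-1, ?_⟩
    have h1 : (of i : FreeGroup α) = mk [(i, true)] := rfl
    rw [zpow_neg, zpow_one, h1, inv_mk]
    rfl
  · exact ⟨1, by rw [zpow_one]; rfl⟩

lemma invRev_cons (x : α × Bool) (M : List (α × Bool)) :
    invRev (x :: M) = invRev M ++ [(x.1, !x.2)] := by
  simp [invRev]

lemma invRev_concat (y : α × Bool) (M : List (α × Bool)) :
    invRev (M ++ [y]) = (y.1, !y.2) :: invRev M := by
  simp [invRev]

lemma toWord_cons_mul (x : α × Bool) (g : FreeGroup α)
    (h : ∀ L', g.toWord ≠ (x.1, !x.2) :: L') :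
    (mk [x] * g).toWord = x :: g.toWord := by
  have h1 : mk [x] * g = mk (x :: g.toWord) := by
    conv_lhs => rw [← mk_toWord (x := g)]
    rw [mul_mk]
    rfl
  rw [h1, toWord_mk, reduce.cons, reduce_toWord]
  rcases hL : g.toWord with _ | ⟨y, ys⟩
  · rfl
  · have hy : y ≠ (x.1, !x.2) := fun hc => h ys (by rw [hL, hc])
    have hcond : ¬(x.1 = y.1 ∧ x.2 = !y.2) := by
      rintro ⟨hc1, hc2⟩
      apply hy
      ext
      · exact hc1.symm
      · simp [hc2]
    simp only [if_neg hcond]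

lemma commute_zpow_aux (i : α) : ∀ (N : ℕ) (g : FreeGroup α), g.norm ≤ N →
    Commute g (of i) → ∃ k : ℤ, g = of i ^ k := by
  intro N
  induction N with
  | zero =>
    intro g hg _
    refine ⟨0, ?_⟩
    rw [zpow_zero]
    exact norm_eq_zero.mp (Nat.le_zero.mp hg)
  | succ N IH =>
    have peel : ∀ g : FreeGroup α, g.norm ≤ N + 1 → Commute g (of i) →
        ∀ (b : Bool) (L : List (α × Bool)), g.toWord = (i, b) :: L → ∃ k : ℤ, g = of i ^ k := by
      intro g hg hc b L hL
      obtain ⟨hgeq, hLred⟩ := exists_tail hL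
      obtain ⟨m, hm⟩ := single_eq_zpow i b
      have hmk : (mk L : FreeGroup α) = of i ^ (-m) * g := by
        rw [hgeq, hm, ← mul_assoc, ← zpow_add, neg_add_cancel, zpow_zero, one_mul]
      have hc' : Commute (mk L : FreeGroup α) (of i) := by
        rw [hmk]
        exact Commute.mul_left ((Commute.refl (of i)).zpow_left _) hc
      have hnorm : (mk L : FreeGroup α).norm ≤ N := by
        have h1 : g.norm = L.length + 1 := by
          have : g.norm = g.toWord.length := rfl
          rw [this, hL]; rfl
        have h2 : (mk L : FreeGroup α).norm = L.length := by
          have : (mk L : FreeGroup α).norm = (mk L : FreeGroup α).toWord.length := rfl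
          rw [this, hLred]
        omega
      obtain ⟨k, hk⟩ := IH _ hnorm hc'
      exact ⟨m + k, by rw [hgeq, hm, hk, zpow_add]⟩
    intro g hg hc
    rcases hx : g.toWord with _ | ⟨x, L⟩
    · exact ⟨0, by rw [zpow_zero]; exact toWord_eq_nil_iff.mp hx⟩
    rcases List.eq_nil_or_concat (x :: L) with hnil | ⟨M, y, hy⟩
    · simp at hnil
    rw [List.concat_eq_append] at hy
    by_cases hxi : x.1 = i
    · exact peel g hg hc x.2 L (by rw [hx]; congr 1; ext <;> simp [hxi])
    by_cases hyi : y.1 = i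
    · have hcinv : Commute g⁻¹ (of i) := hc.inv_left
      have hginv : g⁻¹.toWord = (i, !y.2) :: invRev M := by
        rw [toWord_inv, hx, hy, invRev_concat, hyi]
      obtain ⟨k, hk⟩ := peel g⁻¹ (by rw [norm_inv_eq]; exact hg) hcinv _ _ hginv
      refine ⟨-k, ?_⟩
      rw [zpow_neg, ← hk, inv_inv]
    · exfalso
      have hxy : (of i * g).toWord = (i, true) :: g.toWord := by
        have : (of i : FreeGroup α) = mk [(i, true)] := rfl
        rw [this]
        refine toWord_cons_mul (i, true) g ?_
        intro L' hcontra
        rw [hx] at hcontra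
        injection hcontra with h1 _
        exact hxi (by rw [h1])
      have hyx : (g * of i).toWord = g.toWord ++ [(i, true)] := by
        have h1 : (g * of i)⁻¹ = mk [(i, false)] * g⁻¹ := by
          rw [mul_inv_rev]
          congr 1
        have h2 : ((g * of i)⁻¹).toWord = (i, false) :: g⁻¹.toWord := by
          rw [h1]
          refine toWord_cons_mul (i, false) g⁻¹ ?_
          intro L' hcontra
          rw [toWord_inv, hx, hy, invRev_concat] at hcontra
          injection hcontra with h3 _
          apply hyi
          have := congrArg Prod.fst h3
          simpa using this
        have h3 : invRev ((g * of i).toWord) = (i, false) :: invRev g.toWord := by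
          rw [← toWord_inv]
          rw [h2, toWord_inv]
        have h4 := congrArg invRev h3
        rw [invRev_invRev, invRev_cons, invRev_invRev] at h4
        simpa using h4
      have heq : (g * of i).toWord = (of i * g).toWord := by rw [← hc.eq]
      rw [hxy, hyx, hx] at heq
      rw [List.cons_append] at heq
      injection heq with h1 _
      exact hxi (by rw [h1])

lemma eq_one_of_commute_pair {i j : α} (hij : i ≠ j) {g : FreeGroup α}
    (hi : Commute g (of i)) (hj : Commute g (of j)) : g = 1 := by
  obtain ⟨k, hk⟩ := commute_zpow_aux i g.norm g le_rfl hi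
  obtain ⟨m, hm⟩ := commute_zpow_aux j g.norm g le_rfl hj
  let e : FreeGroup α →* Multiplicative ℤ :=
    FreeGroup.lift fun a => if a = i then Multiplicative.ofAdd (1 : ℤ) else 1
  have e_i : e (of i) = Multiplicative.ofAdd (1 : ℤ) := by simp [e, FreeGroup.lift_apply_of]
  have e_j : e (of j) = 1 := by simp [e, FreeGroup.lift_apply_of, hij.symm]
  have h1 : e g = Multiplicative.ofAdd k := by
    rw [hk, map_zpow, e_i]
    apply Multiplicative.toAdd.injective
    simp
  have h2 : e g = 1 := by rw [hm, map_zpow, e_j, one_zpow]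
  have hk0 : k = 0 := by
    have := h1.symm.trans h2
    have := congrArg Multiplicative.toAdd this
    simpa using this
  rw [hk, hk0, zpow_zero]


/-! ### retraction and psi -/

def retr (n : ℕ) : FreeGroup (Fin n) →* F2 :=
  FreeGroup.lift fun j : Fin n => if h : (j : ℕ) < 2 then FreeGroup.of ⟨(j : ℕ), h⟩ else 1

lemma retr_emb (n : ℕ) (hn : 2 ≤ n) (a : F2) : retr n (emb n hn a) = a := by
  have h : (retr n).comp (emb n hn) = MonoidHom.id F2 := by
    apply FreeGroup.ext_hom
    intro k
    rw [MonoidHom.comp_apply, MonoidHom.id_apply, emb, FreeGroup.lift_apply_of]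
    show FreeGroup.lift _ (FreeGroup.of (Fin.castLE hn k)) = FreeGroup.of k
    rw [FreeGroup.lift_apply_of, dif_pos (show ((Fin.castLE hn k : Fin n) : ℕ) < 2 by
      simpa using k.isLt)]
    exact congrArg FreeGroup.of (Fin.ext (by simp))
  exact DFunLike.congr_fun h a

lemma emb_inj (n : ℕ) (hn : 2 ≤ n) : Function.Injective (emb n hn) :=
  Function.LeftInverse.injective (retr_emb n hn)

lemma phiU_of_lt (n : ℕ) (hn : 2 ≤ n) (θ : F2 →* MulAut F2) (u : SDP θ n) (j : Fin n)
    (h : (j : ℕ) < 2) :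
    phiU n hn θ u (FreeGroup.of j) = emb n hn (θ u.right (FreeGroup.of ⟨(j : ℕ), h⟩)) := by
  show FreeGroup.lift _ (FreeGroup.of j) = _
  rw [FreeGroup.lift_apply_of, dif_pos h]

lemma phiU_of_ge (n : ℕ) (hn : 2 ≤ n) (θ : F2 →* MulAut F2) (u : SDP θ n) (j : Fin n)
    (h : ¬(j : ℕ) < 2) (i : Fin (n - 2)) (hi : (i : ℕ) + 2 = (j : ℕ)) :
    phiU n hn θ u (FreeGroup.of j) =
      emb n hn (u.left.unop i).1 * FreeGroup.of j * (emb n hn (u.left.unop i).2)⁻¹ := by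
  have hieq : i = ⟨(j : ℕ) - 2, by have := j.isLt; omega⟩ := by
    ext; simp; omega
  rw [hieq]
  show FreeGroup.lift _ (FreeGroup.of j) = _
  rw [FreeGroup.lift_apply_of, dif_neg h]

lemma emb_of (n : ℕ) (hn : 2 ≤ n) (k : Fin 2) :
    emb n hn (FreeGroup.of k) = FreeGroup.of (Fin.castLE hn k) :=
  FreeGroup.lift_apply_of

lemma castLE_lt (n : ℕ) (hn : 2 ≤ n) (k : Fin 2) : ((Fin.castLE hn k : Fin n) : ℕ) < 2 := by
  simpa using k.isLt

lemma castLE_mk (n : ℕ) (hn : 2 ≤ n) (k : Fin 2) :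
    (⟨((Fin.castLE hn k : Fin n) : ℕ), castLE_lt n hn k⟩ : Fin 2) = k := by
  ext; simp

lemma phiU_emb (n : ℕ) (hn : 2 ≤ n) (θ : F2 →* MulAut F2) (u : SDP θ n) (a : F2) :
    phiU n hn θ u (emb n hn a) = emb n hn (θ u.right a) := by
  have h : (phiU n hn θ u).comp (emb n hn) = (emb n hn).comp (θ u.right).toMonoidHom := by
    apply FreeGroup.ext_hom
    intro k
    show phiU n hn θ u (emb n hn (FreeGroup.of k)) = emb n hn (θ u.right (FreeGroup.of k))
    rw [emb_of, phiU_of_lt n hn θ u _ (castLE_lt n hn k), castLE_mk n hn k]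
  exact DFunLike.congr_fun h a

lemma SDP_mul_right (θ : F2 →* MulAut F2) {n : ℕ} (u v : SDP θ n) :
    (u * v).right = u.right * v.right := rfl

lemma SDP_mul_left_unop (θ : F2 →* MulAut F2) {n : ℕ} (u v : SDP θ n) (i : Fin (n - 2)) :
    (u * v).left.unop i =
      (θ u.right (v.left.unop i).1 * (u.left.unop i).1,
       θ u.right (v.left.unop i).2 * (u.left.unop i).2) := by
  show ((u.left * diagActOp θ (n - 2) u.right v.left).unop i) = _
  rw [MulOpposite.unop_mul, Pi.mul_apply]
  show (MulEquiv.prodCongr (θ u.right) (θ u.right)) (v.left.unop i) * u.left.unop i = _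
  apply Prod.ext <;> simp [MulEquiv.prodCongr]

lemma phiU_one (n : ℕ) (hn : 2 ≤ n) (θ : F2 →* MulAut F2) :
    phiU n hn θ 1 = MonoidHom.id (FreeGroup (Fin n)) := by
  apply FreeGroup.ext_hom
  intro j
  by_cases h : (j : ℕ) < 2
  · rw [phiU_of_lt n hn θ 1 j h]
    have h1 : (1 : SDP θ n).right = 1 := rfl
    rw [h1, _root_.map_one]
    show emb n hn (FreeGroup.of ⟨(j : ℕ), h⟩) = FreeGroup.of j
    rw [emb_of]
    exact congrArg FreeGroup.of (Fin.ext (by simp))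
  · rw [phiU_of_ge n hn θ 1 j h ⟨(j : ℕ) - 2, by have := j.isLt; omega⟩ (by
      simp; have := j.isLt; omega)]
    have h1 : ((1 : SDP θ n).left.unop ⟨(j : ℕ) - 2, by have := j.isLt; omega⟩) = 1 := rfl
    rw [h1]
    simp

lemma phiU_mul (n : ℕ) (hn : 2 ≤ n) (θ : F2 →* MulAut F2) (u v : SDP θ n) :
    phiU n hn θ (u * v) = (phiU n hn θ u).comp (phiU n hn θ v) := by
  apply FreeGroup.ext_hom
  intro j
  rw [MonoidHom.comp_apply]
  by_cases h : (j : ℕ) < 2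
  · rw [phiU_of_lt n hn θ (u * v) j h, phiU_of_lt n hn θ v j h, phiU_emb, SDP_mul_right,
      _root_.map_mul]
    rfl
  · have hj2 : (j : ℕ) - 2 < n - 2 := by have := j.isLt; omega
    set i : Fin (n - 2) := ⟨(j : ℕ) - 2, hj2⟩ with hidef
    have hij : (i : ℕ) + 2 = (j : ℕ) := by simp [hidef]; omega
    rw [phiU_of_ge n hn θ (u * v) j h i hij, phiU_of_ge n hn θ v j h i hij,
      _root_.map_mul, _root_.map_mul, _root_.map_inv, phiU_emb, phiU_emb,
      phiU_of_ge n hn θ u j h i hij, SDP_mul_left_unop]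
    simp only [_root_.map_mul, mul_inv_rev]
    group

/-! ### the separating homomorphism psi -/

def swHom : Multiplicative ℤ →* MulAut (F2 × F2) :=
  zpowersHom (MulAut (F2 × F2)) (MulEquiv.prodComm : F2 × F2 ≃* F2 × F2)

abbrev KT : Type := SemidirectProduct (F2 × F2) (Multiplicative ℤ) swHom

def psi (n : ℕ) (i : Fin (n - 2)) : FreeGroup (Fin n) →* KT :=
  FreeGroup.lift fun j : Fin n =>
    if h : (j : ℕ) < 2 then SemidirectProduct.inl (FreeGroup.of ⟨(j : ℕ), h⟩, 1)
    else if (j : ℕ) = (i : ℕ) + 2 then SemidirectProduct.inr (Multiplicative.ofAdd 1) else 1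

lemma psi_emb (n : ℕ) (hn : 2 ≤ n) (i : Fin (n - 2)) (a : F2) :
    psi n i (emb n hn a) = SemidirectProduct.inl (a, 1) := by
  have h : (psi n i).comp (emb n hn) =
      (SemidirectProduct.inl : F2 × F2 →* KT).comp (MonoidHom.inl F2 F2) := by
    apply FreeGroup.ext_hom
    intro k
    show psi n i (emb n hn (FreeGroup.of k)) = SemidirectProduct.inl (FreeGroup.of k, 1)
    rw [emb_of]
    show FreeGroup.lift _ (FreeGroup.of _) = _
    rw [FreeGroup.lift_apply_of, dif_pos (castLE_lt n hn k)]
    rw [castLE_mk n hn k]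
  exact DFunLike.congr_fun h a

lemma psi_of_top (n : ℕ) (i : Fin (n - 2)) (j : Fin n) (h : ¬(j : ℕ) < 2)
    (hij : (i : ℕ) + 2 = (j : ℕ)) :
    psi n i (FreeGroup.of j) = SemidirectProduct.inr (Multiplicative.ofAdd 1) := by
  show FreeGroup.lift _ (FreeGroup.of j) = _
  rw [FreeGroup.lift_apply_of, dif_neg h, if_pos hij.symm]

lemma psi_phi_left (n : ℕ) (hn : 2 ≤ n) (θ : F2 →* MulAut F2) (u : SDP θ n)
    (i : Fin (n - 2)) (j : Fin n) (h : ¬(j : ℕ) < 2) (hij : (i : ℕ) + 2 = (j : ℕ)) :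
    (psi n i (phiU n hn θ u (FreeGroup.of j))).left =
      ((u.left.unop i).1, ((u.left.unop i).2)⁻¹) := by
  rw [phiU_of_ge n hn θ u j h i hij, _root_.map_mul, _root_.map_mul, _root_.map_inv,
    psi_emb n hn, psi_emb n hn, psi_of_top n i j h hij]
  apply Prod.ext <;>
    simp [SemidirectProduct.mul_left, SemidirectProduct.mul_right,
      SemidirectProduct.inv_left, SemidirectProduct.inv_right,
      MulEquiv.prodComm] <;> simp [swHom, MulEquiv.prodComm]

end SDPaux

/-- if `θ` realizes `F₂` as a rank-2 free subgroup of `Aut(F₂)` injecting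
into `Out(F₂)`, then `u ↦ φ_u` identifies `F₂^{2n-4} ⋊ F₂` with a subgroup of `Aut(Fₙ)`:
each `φ_u` is an automorphism, the map is an (injective) homomorphism, and its image
projects injectively to `Out(Fₙ)`. -/

theorem sdp_embeds_in_Out_Fn (n : ℕ) (hn : 2 ≤ n) (θ : F2 →* MulAut F2)
    (hθinj : Function.Injective θ)
    (hθout : ∀ a : F2, (∃ g : F2, ∀ w : F2, θ a w = g * w * g⁻¹) → a = 1) :
    (∀ u : SDP θ n, Function.Bijective (phiU n hn θ u)) ∧
    (∀ u v : SDP θ n, phiU n hn θ (u * v) = (phiU n hn θ u).comp (phiU n hn θ v)) ∧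
    Function.Injective (phiU n hn θ) ∧
    (∀ u v : SDP θ n,
      (∃ g : FreeGroup (Fin n), ∀ w, phiU n hn θ u w = g * phiU n hn θ v w * g⁻¹) →
        u = v) := by
  have hbij : ∀ u : SDP θ n, Function.Bijective (phiU n hn θ u) := by
    intro u
    have h1 : (phiU n hn θ u).comp (phiU n hn θ u⁻¹) = MonoidHom.id _ := by
      rw [← SDPaux.phiU_mul, mul_inv_cancel, SDPaux.phiU_one]
    have h2 : (phiU n hn θ u⁻¹).comp (phiU n hn θ u) = MonoidHom.id _ := by
      rw [← SDPaux.phiU_mul, inv_mul_cancel, SDPaux.phiU_one]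
    exact Function.bijective_iff_has_inverse.mpr
      ⟨phiU n hn θ u⁻¹, fun x => DFunLike.congr_fun h2 x, fun x => DFunLike.congr_fun h1 x⟩
  have hinj : Function.Injective (phiU n hn θ) := by
    intro u v huv
    have hR : u.right = v.right := by
      apply hθinj
      have hgen : ∀ k : Fin 2, θ u.right (FreeGroup.of k) = θ v.right (FreeGroup.of k) := by
        intro k
        have h2 : ((Fin.castLE hn k : Fin n) : ℕ) < 2 := SDPaux.castLE_lt n hn k
        have h3 := congrArg (fun f : FreeGroup (Fin n) →* FreeGroup (Fin n) =>
          f (FreeGroup.of (Fin.castLE hn k))) huv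
        rw [SDPaux.phiU_of_lt n hn θ u _ h2, SDPaux.phiU_of_lt n hn θ v _ h2, SDPaux.castLE_mk n hn k] at h3
        exact SDPaux.emb_inj n hn h3
      have := FreeGroup.ext_hom (θ u.right).toMonoidHom (θ v.right).toMonoidHom hgen
      exact MulEquiv.toMonoidHom_injective this
    have hL : u.left = v.left := by
      apply MulOpposite.unop_injective
      funext i
      have hj2 : (i : ℕ) + 2 < n := by have := i.isLt; omega
      set j : Fin n := ⟨(i : ℕ) + 2, hj2⟩ with hjdef
      have h2 : ¬(j : ℕ) < 2 := by simp [hjdef]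
      have hij : (i : ℕ) + 2 = (j : ℕ) := by simp [hjdef]
      have h3 := congrArg (fun f : FreeGroup (Fin n) →* FreeGroup (Fin n) =>
        (SDPaux.psi n i (f (FreeGroup.of j))).left) huv
      rw [SDPaux.psi_phi_left n hn θ u i j h2 hij, SDPaux.psi_phi_left n hn θ v i j h2 hij] at h3
      have h4 := congrArg Prod.fst h3
      have h5 := congrArg Prod.snd h3
      simp only at h4 h5
      apply Prod.ext h4 (inv_injective h5)
    cases u; cases v
    simp only at hR hL
    simp [hR, hL]
  refine ⟨hbij, SDPaux.phiU_mul n hn θ, hinj, ?_⟩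
  rintro u v ⟨g, hg⟩
  have hembuv : ∀ a : F2, emb n hn (θ u.right a) = g * emb n hn (θ v.right a) * g⁻¹ := by
    intro a
    rw [← SDPaux.phiU_emb, ← SDPaux.phiU_emb]
    exact hg _
  have hr2 : ∀ a : F2, θ u.right a = SDPaux.retr n g * θ v.right a * (SDPaux.retr n g)⁻¹ := by
    intro a
    have := congrArg (SDPaux.retr n) (hembuv a)
    simpa [map_mul, SDPaux.retr_emb n hn] using this
  have hβ : u.right * v.right⁻¹ = 1 := by
    apply hθout
    refine ⟨SDPaux.retr n g, fun w => ?_⟩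
    have h1 := hr2 ((θ v.right).symm w)
    rw [MulEquiv.apply_symm_apply] at h1
    rw [map_mul, map_inv]
    show (θ u.right) (((θ v.right)⁻¹ : MulAut F2) w) = _
    rw [show ((θ v.right)⁻¹ : MulAut F2) w = (θ v.right).symm w from rfl]
    exact h1
  have hRuv : u.right = v.right := by rwa [mul_inv_eq_one] at hβ
  have hcomm : ∀ b : F2, Commute g (emb n hn b) := by
    intro b
    have h1 := hembuv ((θ u.right).symm b)
    rw [MulEquiv.apply_symm_apply] at h1
    rw [← hRuv, MulEquiv.apply_symm_apply] at h1
    exact mul_inv_eq_iff_eq_mul.mp h1.symm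
  have hg1 : g = 1 := by
    have hc0 : Commute g (FreeGroup.of (Fin.castLE hn (0 : Fin 2))) := by
      have := hcomm (FreeGroup.of (0 : Fin 2))
      rwa [SDPaux.emb_of] at this
    have hc1 : Commute g (FreeGroup.of (Fin.castLE hn (1 : Fin 2))) := by
      have := hcomm (FreeGroup.of (1 : Fin 2))
      rwa [SDPaux.emb_of] at this
    refine SDPaux.eq_one_of_commute_pair ?_ hc0 hc1
    intro hcon
    have := congrArg Fin.val hcon
    simp at this
  have hfin : phiU n hn θ u = phiU n hn θ v := by
    apply DFunLike.ext
    intro w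
    have h2 := hg w
    rw [hg1] at h2
    simpa using h2
  exact hinj hfin


end
end

section
/- If h : cone(K) → B is a proper expanding map into a metric space B, then there exists t₀ ≥ 0 such that the map G : |K| × [0,∞) → B defined by G(x,t) = h([x, t+t₀]) satisfies G(σ × {0}) ∩ G(τ × [0,∞)) = ∅ for every pair of disjoint simplices σ, τ of K. -/
open Set

noncomputable section

variable {N : ℕ}

/-- The open cone on (the geometric realization of) `K`, realized in `E × ℝ` as
`{(t·x, t) : x ∈ |K|, t ≥ 0}`; the cone point is `(0,0)` and `[x,t] = (t·x, t)`. -/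
def coneSet (K : Geometry.SimplicialComplex ℝ (EuclideanSpace ℝ (Fin N))) :
    Set (EuclideanSpace ℝ (Fin N) × ℝ) :=
  {p | ∃ x ∈ K.space, ∃ t : ℝ, 0 ≤ t ∧ p = (t • x, t)}

/-- The subcone over the simplex `σ`. -/
def coneOf (σ : Finset (EuclideanSpace ℝ (Fin N))) :
    Set (EuclideanSpace ℝ (Fin N) × ℝ) :=
  {p | ∃ x ∈ convexHull ℝ (↑σ : Set (EuclideanSpace ℝ (Fin N))), ∃ t : ℝ, 0 ≤ t ∧ p = (t • x, t)}

/-- Two restrictions `h|A₁`, `h|A₂` diverge: for every `D` there are compact sets outside of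
which the images of the two sets are more than `D` apart. -/
def DivergeOn {X B : Type*} [TopologicalSpace X] [PseudoMetricSpace B]
    (h : X → B) (A₁ A₂ : Set X) : Prop :=
  ∀ D : ℝ, 0 < D → ∃ C₁ C₂ : Set X, IsCompact C₁ ∧ IsCompact C₂ ∧
    ∀ p ∈ A₁ \ C₁, ∀ q ∈ A₂ \ C₂, D < dist (h p) (h q)

/-- `h : cone(K) → B` is expanding: for every pair of disjoint simplices `σ, τ` of `K`,
the restrictions of `h` to the subcones over `σ` and `τ` diverge. -/
def Expanding (K : Geometry.SimplicialComplex ℝ (EuclideanSpace ℝ (Fin N)))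
    {B : Type*} [PseudoMetricSpace B] (h : ↥(coneSet K) → B) : Prop :=
  ∀ σ ∈ K.faces, ∀ τ ∈ K.faces, Disjoint σ τ →
    DivergeOn h {p | (p : _ × ℝ) ∈ coneOf σ} {p | (p : _ × ℝ) ∈ coneOf τ}

/-! A compact subset of the cone has bounded height, so the divergence of `h` on the subcones
over disjoint simplices `σ, τ` makes their images disjoint above some height. As `K` has only
finitely many pairs of simplices, one height `t₀` works for all of them. -/

open Filter

theorem DivergeOn.eventually_ne {X B : Type*} [TopologicalSpace X] [PseudoMetricSpace B]
    {h : X → B} {A₁ A₂ : Set X} (hdiv : DivergeOn h A₁ A₂) {f : X → ℝ} (hf : Continuous f) :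
    ∀ᶠ M in atTop, ∀ p ∈ A₁, ∀ q ∈ A₂, M ≤ f p → M ≤ f q → h p ≠ h q := by
  obtain ⟨C₁, C₂, hC₁, hC₂, hfar⟩ := hdiv 1 one_pos
  obtain ⟨M₁, hM₁⟩ := (hC₁.image hf).bddAbove
  obtain ⟨M₂, hM₂⟩ := (hC₂.image hf).bddAbove
  filter_upwards [eventually_gt_atTop (max M₁ M₂)] with M hM p hp q hq hpM hqM heq
  have hpC : p ∉ C₁ := fun hmem ↦ by
    linarith [hM₁ (mem_image_of_mem f hmem), le_max_left M₁ M₂]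
  have hqC : q ∉ C₂ := fun hmem ↦ by
    linarith [hM₂ (mem_image_of_mem f hmem), le_max_right M₁ M₂]
  have hfar' := hfar p ⟨hp, hpC⟩ q ⟨hq, hqC⟩
  rw [heq, dist_self] at hfar'
  exact absurd hfar' zero_lt_one.not_gt

theorem expanding_map_eventually_unlinked_general
    (K : Geometry.SimplicialComplex ℝ (EuclideanSpace ℝ (Fin N))) (hfin : K.faces.Finite)
    {B : Type*} [MetricSpace B] (h : ↥(coneSet K) → B)
    (hexp : Expanding K h) :
    ∃ t₀ : ℝ, 0 ≤ t₀ ∧ ∀ σ ∈ K.faces, ∀ τ ∈ K.faces, Disjoint σ τ →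
      ∀ (x y : EuclideanSpace ℝ (Fin N)) (t : ℝ), 0 ≤ t →
        x ∈ convexHull ℝ (↑σ : Set (EuclideanSpace ℝ (Fin N))) →
        y ∈ convexHull ℝ (↑τ : Set (EuclideanSpace ℝ (Fin N))) →
        ∀ (hp : (t₀ • x, t₀) ∈ coneSet K) (hq : ((t + t₀) • y, t + t₀) ∈ coneSet K),
          h ⟨(t₀ • x, t₀), hp⟩ ≠ h ⟨((t + t₀) • y, t + t₀), hq⟩ := by
  have hheight : Continuous fun p : coneSet K ↦ (p : EuclideanSpace ℝ (Fin N) × ℝ).2 := by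
    fun_prop
  have hev : ∀ᶠ M in atTop, ∀ σ ∈ K.faces, ∀ τ ∈ K.faces, Disjoint σ τ →
      ∀ p q : coneSet K, (p : EuclideanSpace ℝ (Fin N) × ℝ) ∈ coneOf σ →
        (q : EuclideanSpace ℝ (Fin N) × ℝ) ∈ coneOf τ →
        M ≤ (p : EuclideanSpace ℝ (Fin N) × ℝ).2 → M ≤ (q : EuclideanSpace ℝ (Fin N) × ℝ).2 →
        h p ≠ h q := by
    simp only [hfin.eventually_all, eventually_imp_distrib_left]
    exact fun σ hσ τ hτ hdisj ↦ (hexp σ hσ τ hτ hdisj).eventually_ne hheight |>.mono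
      fun M hM p q hp hq ↦ hM p hp q hq
  obtain ⟨t₀, hunlinked, ht₀⟩ := (hev.and (eventually_ge_atTop 0)).exists
  refine ⟨t₀, ht₀, fun σ hσ τ hτ hdisj x y t ht hx hy hp hq ↦ ?_⟩
  exact hunlinked σ hσ τ hτ hdisj _ _ ⟨x, hx, t₀, ht₀, rfl⟩ ⟨y, hy, t + t₀, by linarith, rfl⟩
    le_rfl (by simp [ht])

/-- if `h : cone(K) → B` is a proper expanding map into a metric space, then
there is `t₀ ≥ 0` such that `G(x,t) := h([x, t+t₀])` satisfies
`G(σ×{0}) ∩ G(τ×[0,∞)) = ∅` for all pairs of disjoint simplices `σ, τ` of `K`. -/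
theorem expanding_map_eventually_unlinked
    (K : Geometry.SimplicialComplex ℝ (EuclideanSpace ℝ (Fin N))) (hfin : K.faces.Finite)
    {B : Type*} [MetricSpace B] (h : ↥(coneSet K) → B)
    (hcont : Continuous h) (hproper : IsProperMap h) (hexp : Expanding K h) :
    ∃ t₀ : ℝ, 0 ≤ t₀ ∧ ∀ σ ∈ K.faces, ∀ τ ∈ K.faces, Disjoint σ τ →
      ∀ (x y : EuclideanSpace ℝ (Fin N)) (t : ℝ), 0 ≤ t →
        x ∈ convexHull ℝ (↑σ : Set (EuclideanSpace ℝ (Fin N))) →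
        y ∈ convexHull ℝ (↑τ : Set (EuclideanSpace ℝ (Fin N))) →
        ∀ (hp : (t₀ • x, t₀) ∈ coneSet K) (hq : ((t + t₀) • y, t + t₀) ∈ coneSet K),
          h ⟨(t₀ • x, t₀), hp⟩ ≠ h ⟨((t + t₀) • y, t + t₀), hq⟩ :=
  expanding_map_eventually_unlinked_general K hfin h hexp

end
end
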